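/- In an update flow network, if for a flow pair P = (F^o, F^u) the paths F^o and F^u share only the vertices s and t, then for every set U of resolved updates for which P is transient, the transient flow T_{P,U} is either exactly F^o or exactly F^u; moreover T_{P,U} = F^u if and only if (s, P) ∈ U and all updates (v, P) for internal vertices v of F^u are in U. -/

import Mathlib

/-!
A formal model of congestion-free flow rerouting (network update scheduling).
An update flow network consists of a source `s`, a terminal `t`, edge
capacities, and `k` update flow pairs, each given by an old `s`-`t` path and
an update (new) `s`-`t` path (represented as lists of vertices) with a demand.
An update sequence assigns to every update `(v, i)` (vertex `v`, pair `i`) a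
round; it is feasible if resolving all updates of earlier rounds together with
any subset of the current round always leaves, for every pair, a unique valid
(capacity-respecting) transient `s`-`t` path among the active edges, and the
family of transient paths jointly respects the capacities.
-/

namespace FlowUpdate

variable {V : Type} [DecidableEq V] {k : ℕ}

/-- The edges of a path given as a list of vertices. -/
def edgesOf (p : List V) : List (V × V) := p.zip p.tail

/-- The subpath of `p` from vertex `a` to vertex `z` (inclusive). -/
def segment (p : List V) (a z : V) : List V :=
  ((p.dropWhile (fun v => decide (v ≠ a))).takeWhile (fun v => decide (v ≠ z))) ++ [z]

/-- The outgoing edge of `v` on the path `p`, if any. -/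
def outEdge (p : List V) (v : V) : Option (V × V) :=
  (edgesOf p).find? (fun e => decide (e.1 = v))

/-- An update flow network with `k` update flow pairs. -/
structure UFN (V : Type) (k : ℕ) where
  s : V
  t : V
  cap : V → V → ℕ
  old : Fin k → List V
  new : Fin k → List V
  demand : Fin k → ℕ

namespace UFN

/-- After resolving the set of updates `U`, edge `e` is active for pair `i` iff
it is an old edge whose tail is not yet updated, or a new edge whose tail is
updated. -/
def active (G : UFN V k) (U : Set (V × Fin k)) (i : Fin k) (e : V × V) : Prop :=
  (e ∈ edgesOf (G.old i) ∧ (e.1, i) ∉ U) ∨ (e ∈ edgesOf (G.new i) ∧ (e.1, i) ∈ U)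

/-- `p` is a simple `s`-`t` path all of whose edges satisfy `E`. -/
def IsPathIn (E : V × V → Prop) (s t : V) (p : List V) : Prop :=
  p.head? = some s ∧ p.getLast? = some t ∧ List.Chain' (fun u v => E (u, v)) p ∧ p.Nodup

/-- `p` respects the capacities for the demand of pair `i`. -/
def ValidPath (G : UFN V k) (i : Fin k) (p : List V) : Prop :=
  ∀ e ∈ edgesOf p, G.demand i ≤ G.cap e.1 e.2

/-- `T` is the unique valid transient path of pair `i` after resolving `U`. -/
def TransientPair (G : UFN V k) (U : Set (V × Fin k)) (i : Fin k) (T : List V) : Prop :=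
  IsPathIn (G.active U i) G.s G.t T ∧ G.ValidPath i T ∧
    ∀ p, IsPathIn (G.active U i) G.s G.t p → G.ValidPath i p → p = T

/-- After resolving `U`, every pair has a unique valid transient path, and the
family of transient paths jointly respects the capacities. -/
def TransientFamily (G : UFN V k) (U : Set (V × Fin k)) : Prop :=
  ∃ T : Fin k → List V,
    (∀ i, G.TransientPair U i (T i)) ∧
    (∀ u v : V, (∑ i : Fin k, if (u, v) ∈ edgesOf (T i) then G.demand i else 0) ≤ G.cap u v)

/-- An update sequence (an assignment of rounds to all updates) is feasible if
after resolving all updates of rounds `< r` together with any subset of the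
updates of round `r`, all pairs admit a transient family. -/
def Feasible (G : UFN V k) (R : V × Fin k → ℕ) : Prop :=
  ∀ r : ℕ, ∀ S : Set (V × Fin k), (∀ u ∈ S, R u = r) →
    G.TransientFamily ({u | R u < r} ∪ S)

/-- `p` is a simple path from the source to the terminal. -/
def IsStPath (G : UFN V k) (p : List V) : Prop :=
  p.head? = some G.s ∧ p.getLast? = some G.t ∧ p.Nodup

/-- Well-formedness of an update flow network: all old and new flows are simple
`s`-`t` paths, each pair forms a DAG, each new path respects capacities for its
own demand, and both the old family and the new family jointly respect the
capacities. -/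
def WellFormed (G : UFN V k) : Prop :=
  (∀ i, G.IsStPath (G.old i) ∧ G.IsStPath (G.new i)) ∧
  (∀ i, ∃ ord : V → ℕ, ∀ e ∈ edgesOf (G.old i) ++ edgesOf (G.new i), ord e.1 < ord e.2) ∧
  (∀ i, G.ValidPath i (G.new i)) ∧
  (∀ u v : V, (∑ i : Fin k, if (u, v) ∈ edgesOf (G.old i) then G.demand i else 0) ≤ G.cap u v) ∧
  (∀ u v : V, (∑ i : Fin k, if (u, v) ∈ edgesOf (G.new i) then G.demand i else 0) ≤ G.cap u v)

/-- The common vertices of the old and new path of pair `i`, in path order. -/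
def commons (G : UFN V k) (i : Fin k) : List V :=
  (G.old i).filter (fun v => decide (v ∈ G.new i))

/-- A block of pair `i` is a pair `(a, z)` of consecutive common vertices of the
old and new paths of `i`. -/
def IsBlock (G : UFN V k) (i : Fin k) (b : V × V) : Prop :=
  b ∈ edgesOf (G.commons i)

/-- A (candidate) block: a pair index together with its start and end vertices. -/
abbrev Blk (V : Type) (k : ℕ) := Fin k × V × V

def IsBlk (G : UFN V k) (b : Blk V k) : Prop := G.IsBlock b.1 b.2

/-- The old-path segment of a block. -/
def blkOldSeg (G : UFN V k) (b : Blk V k) : List V := segment (G.old b.1) b.2.1 b.2.2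

/-- The update-path segment of a block. -/
def blkNewSeg (G : UFN V k) (b : Blk V k) : List V := segment (G.new b.1) b.2.1 b.2.2

/-- Block `b1` depends on block `b2` (written `b1 → b2`) if they belong to
different pairs and some edge lies on `b1`'s update path and on `b2`'s old path
with capacity less than the sum of the two demands. -/
def Dep (G : UFN V k) (b1 b2 : Blk V k) : Prop :=
  G.IsBlk b1 ∧ G.IsBlk b2 ∧ b1.1 ≠ b2.1 ∧
  ∃ e : V × V, e ∈ edgesOf (G.blkNewSeg b1) ∧ e ∈ edgesOf (G.blkOldSeg b2) ∧
    G.cap e.1 e.2 < G.demand b1.1 + G.demand b2.1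

/-- The dependency graph contains a directed cycle. -/
def HasDepCycle (G : UFN V k) : Prop := ∃ b : Blk V k, Relation.TransGen G.Dep b b

/-- The number of rounds used by an update sequence. -/
def numRounds [Fintype V] (R : V × Fin k → ℕ) : ℕ :=
  (Finset.image R Finset.univ).card

/-- An update `(v, i)` is empty if `v`'s outgoing old edge and outgoing new edge
for pair `i` coincide (in particular if `v` has no outgoing edge for pair `i`). -/
def EmptyUpd (G : UFN V k) (u : V × Fin k) : Prop :=
  outEdge (G.old u.2) u.1 = outEdge (G.new u.2) u.1

instance (G : UFN V k) (u : V × Fin k) : Decidable (G.EmptyUpd u) :=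
  inferInstanceAs (Decidable (outEdge (G.old u.2) u.1 = outEdge (G.new u.2) u.1))

/-- `R` updates every block in (at most) 3 consecutive rounds: first all internal
update-path vertices of the block, then the start vertex, then all old-path-only
vertices of the block. -/
def BlockPattern (G : UFN V k) (R : V × Fin k → ℕ) : Prop :=
  ∀ b : Blk V k, G.IsBlk b → ∃ r : ℕ,
    (∀ v ∈ G.blkNewSeg b, v ≠ b.2.1 → v ≠ b.2.2 → R (v, b.1) = r) ∧
    R (b.2.1, b.1) = r + 1 ∧
    (∀ v ∈ G.blkOldSeg b, v ∉ G.new b.1 → R (v, b.1) = r + 2)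

/-- The size of the network (total length of the flow paths). -/
def size (G : UFN V k) : ℕ := ∑ i : Fin k, ((G.old i).length + (G.new i).length)

end UFN

end FlowUpdate

/-!
Away from `s` and `t` the two paths are vertex-disjoint, and `t` has no outgoing edge on
either path, so the only active edge leaving a vertex `u ≠ s` of `F^o` is its `F^o`-edge;
likewise on `F^u`, since a vertex off `F^o` has no `F^o`-edge that could be active. At `s`
the update `(s, P)` selects the `F^o`- or the `F^u`-edge, so it alone decides which of the
two paths is closed under active edges, and an active simple `s`-`t` path must run along
that one. Conversely, once `T = F^u`, every internal vertex of `F^u` leaves along an active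
`F^u`-edge, which forces its update to be resolved.
-/

namespace FlowUpdate

section EdgesOf

variable {V : Type}

@[simp]
lemma edgesOf_nil : edgesOf ([] : List V) = [] := rfl

@[simp]
lemma edgesOf_singleton (a : V) : edgesOf [a] = [] := rfl

@[simp]
lemma edgesOf_cons_cons (a b : V) (l : List V) :
    edgesOf (a :: b :: l) = (a, b) :: edgesOf (b :: l) := rfl

lemma fst_mem_of_mem_edgesOf {p : List V} {e : V × V} (h : e ∈ edgesOf p) : e.1 ∈ p :=
  (List.of_mem_zip h).1

lemma snd_mem_of_mem_edgesOf {p : List V} {e : V × V} (h : e ∈ edgesOf p) : e.2 ∈ p :=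
  List.mem_of_mem_tail (List.of_mem_zip h).2

lemma isChain_iff_forall_mem_edgesOf {R : V → V → Prop} {p : List V} :
    p.IsChain R ↔ ∀ e ∈ edgesOf p, R e.1 e.2 := by
  induction p with
  | nil => simp
  | cons a l ih =>
    cases l with
    | nil => simp
    | cons b l => simp [List.isChain_cons_cons, ih]

lemma not_mem_edgesOf_of_getLast? {p : List V} {t w : V} (hp : p.Nodup)
    (hl : p.getLast? = some t) : (t, w) ∉ edgesOf p := by
  induction p with
  | nil => simp
  | cons a l ih =>
    cases l with
    | nil => simp
    | cons b l =>
      rw [List.getLast?_cons_cons] at hl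
      rw [edgesOf_cons_cons, List.mem_cons, Prod.mk.injEq, not_or]
      refine ⟨fun h => List.nodup_cons.mp hp |>.1 (h.1 ▸ List.mem_of_getLast? hl), ?_⟩
      exact ih (List.nodup_cons.mp hp).2 hl

lemma exists_mem_edgesOf_of_ne_getLast? {p : List V} {t v : V} (hl : p.getLast? = some t)
    (hv : v ∈ p) (hvt : v ≠ t) : ∃ w, (v, w) ∈ edgesOf p := by
  induction p with
  | nil => cases hv
  | cons a l ih =>
    cases l with
    | nil =>
      simp only [List.mem_singleton, List.getLast?_singleton, Option.some.injEq] at hv hl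
      exact absurd (hv.trans hl) hvt
    | cons b l =>
      rw [List.getLast?_cons_cons] at hl
      rcases List.mem_cons.mp hv with rfl | hv
      · exact ⟨b, List.mem_cons_self⟩
      · obtain ⟨w, hw⟩ := ih hl hv
        exact ⟨w, List.mem_cons_of_mem _ hw⟩

lemma edgesOf_subset_of_isChain {R : V → V → Prop} {P q : List V}
    (hP : ∀ u ∈ P, ∀ w, R u w → (u, w) ∈ edgesOf P) (hq : q.IsChain R)
    (hhead : ∀ a ∈ q.head?, a ∈ P) : edgesOf q ⊆ edgesOf P := by
  induction q with
  | nil => simp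
  | cons a l ih =>
    cases l with
    | nil => simp
    | cons b l =>
      obtain ⟨hab, hq⟩ := List.isChain_cons_cons.mp hq
      have hedge : (a, b) ∈ edgesOf P := hP a (hhead a rfl) b hab
      rw [edgesOf_cons_cons]
      refine List.cons_subset.mpr ⟨hedge, ih hq ?_⟩
      rintro _ ⟨⟩
      exact snd_mem_of_mem_edgesOf hedge

lemma eq_of_edgesOf_subset {p q : List V} (hp : p.Nodup) (hq : q.Nodup)
    (hhead : q.head? = p.head?) (hlast : q.getLast? = p.getLast?)
    (hsub : edgesOf q ⊆ edgesOf p) : q = p := by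
  induction q generalizing p with
  | nil => exact (List.head?_eq_none_iff.mp hhead.symm).symm
  | cons a l ih =>
    obtain ⟨p, rfl⟩ := List.head?_eq_some_iff.mp hhead.symm
    cases l with
    | nil =>
      cases p with
      | nil => rfl
      | cons b p =>
        rw [List.getLast?_singleton, List.getLast?_cons_cons, eq_comm] at hlast
        exact absurd (List.mem_of_getLast? hlast) (List.nodup_cons.mp hp).1
    | cons b l =>
      have hab : (a, b) ∈ edgesOf (a :: p) := hsub List.mem_cons_self
      cases p with
      | nil => simp at hab
      | cons c p =>
        obtain rfl : b = c := by
          rw [edgesOf_cons_cons, List.mem_cons, Prod.mk.injEq] at hab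
          exact (hab.resolve_right fun h =>
            (List.nodup_cons.mp hp).1 (fst_mem_of_mem_edgesOf h)).2
        rw [ih (List.nodup_cons.mp hp).2 (List.nodup_cons.mp hq).2 rfl
          (by simpa only [List.getLast?_cons_cons] using hlast)]
        intro e he
        have he' := hsub (List.mem_cons_of_mem _ he)
        rw [edgesOf_cons_cons, List.mem_cons] at he'
        refine he'.resolve_left ?_
        rintro rfl
        exact (List.nodup_cons.mp hq).1 (fst_mem_of_mem_edgesOf he)

end EdgesOf

namespace UFN

variable {V : Type} {k : ℕ} {G : UFN V k}

lemma IsStPath.eq_of_isPathIn {P T : List V} (hP : G.IsStPath P) {E : V × V → Prop}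
    (hT : IsPathIn E G.s G.t T) (hclosed : ∀ u ∈ P, ∀ w, E (u, w) → (u, w) ∈ edgesOf P) :
    T = P := by
  obtain ⟨hPh, hPl, hPnd⟩ := hP
  obtain ⟨hTh, hTl, hTch, hTnd⟩ := hT
  refine eq_of_edgesOf_subset hPnd hTnd (hTh.trans hPh.symm) (hTl.trans hPl.symm) ?_
  refine edgesOf_subset_of_isChain hclosed hTch ?_
  rw [hTh]
  rintro _ ⟨⟩
  exact List.mem_of_mem_head? hPh

variable {U : Set (V × Fin k)} {i : Fin k}

lemma active_mem_edgesOf_old (hN : G.IsStPath (G.new i))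
    (hdisj : ∀ v, v ∈ G.old i → v ∈ G.new i → v = G.s ∨ v = G.t) (hs : (G.s, i) ∉ U)
    {u w : V} (hu : u ∈ G.old i) (h : G.active U i (u, w)) : (u, w) ∈ edgesOf (G.old i) := by
  rcases h with ⟨h, -⟩ | ⟨h, hU⟩
  · exact h
  · rcases hdisj u hu (fst_mem_of_mem_edgesOf h) with rfl | rfl
    · exact absurd hU hs
    · exact absurd h (not_mem_edgesOf_of_getLast? hN.2.2 hN.2.1)

lemma active_mem_edgesOf_new (hO : G.IsStPath (G.old i))
    (hdisj : ∀ v, v ∈ G.old i → v ∈ G.new i → v = G.s ∨ v = G.t) (hs : (G.s, i) ∈ U)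
    {u w : V} (hu : u ∈ G.new i) (h : G.active U i (u, w)) : (u, w) ∈ edgesOf (G.new i) := by
  rcases h with ⟨h, hU⟩ | ⟨h, -⟩
  · rcases hdisj u (fst_mem_of_mem_edgesOf h) hu with rfl | rfl
    · exact absurd hs hU
    · exact absurd h (not_mem_edgesOf_of_getLast? hO.2.2 hO.2.1)
  · exact h

end UFN

end FlowUpdate

open FlowUpdate in
/-- If the old and update paths of a flow pair share only the
vertices `s` and `t` (and are distinct), then any transient flow of the pair is
either exactly the old path or exactly the new path; and it is the new path if
and only if `s` and all internal vertices of the new path have been updated. -/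
theorem stmt18 {V : Type} [DecidableEq V] {k : ℕ} (G : UFN V k)
    (hWF : G.WellFormed) (i : Fin k)
    (hdisj : ∀ v, v ∈ G.old i → v ∈ G.new i → v = G.s ∨ v = G.t)
    (hne : G.old i ≠ G.new i)
    (U : Set (V × Fin k)) (T : List V) (hT : G.TransientPair U i T) :
    (T = G.old i ∨ T = G.new i) ∧
    (T = G.new i ↔
      ((G.s, i) ∈ U ∧ ∀ v ∈ G.new i, v ≠ G.s → v ≠ G.t → (v, i) ∈ U)) := by
  obtain ⟨hO, hN⟩ := hWF.1 i
  have hTpath := hT.1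
  have hT_old : (G.s, i) ∉ U → T = G.old i := fun hs =>
    hO.eq_of_isPathIn hTpath fun _ hu _ h => UFN.active_mem_edgesOf_old hN hdisj hs hu h
  have hT_new : (G.s, i) ∈ U → T = G.new i := fun hs =>
    hN.eq_of_isPathIn hTpath fun _ hu _ h => UFN.active_mem_edgesOf_new hO hdisj hs hu h
  refine ⟨(em _).elim (Or.inr ∘ hT_new) (Or.inl ∘ hT_old), ?_, fun h => hT_new h.1⟩
  intro hTN
  have hs : (G.s, i) ∈ U := by_contra fun hs => hne ((hT_old hs).symm.trans hTN)
  refine ⟨hs, fun v hv hvs hvt => ?_⟩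
  obtain ⟨w, hw⟩ := exists_mem_edgesOf_of_ne_getLast? hN.2.1 hv hvt
  have hact : G.active U i (v, w) :=
    isChain_iff_forall_mem_edgesOf.mp hTpath.2.2.1 _ (hTN ▸ hw)
  have hvO : v ∉ G.old i := fun hvO => (hdisj v hvO hv).elim hvs hvt
  exact (hact.resolve_left fun h => hvO (fst_mem_of_mem_edgesOf h.1)).2
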